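/- Let r ≥ 1, let A ⊂ ℤʳ be a finite set, and let g be a nonzero Laurent polynomial in r variables over ℂ. Then there exists a finite subset F ⊂ (ℂˣ)ʳ with g(u) ≠ 0 for every u ∈ F, such that for every Laurent polynomial p = ∑_{a∈A} p_a x^a over ℂ with support contained in A one has max_{a∈A} |p_a| ≤ max_{u∈F} |p(u)|. -/

import Mathlib

open scoped BigOperators

noncomputable section

/-- The ring of Laurent polynomials in variables indexed by `σ` over `K`,
realized as the monoid algebra `K[x₁^{±1},…]` on the exponent group `σ → ℤ`. -/
abbrev LaurentPoly (K : Type*) [CommSemiring K] (σ : Type*) : Type _ :=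
  AddMonoidAlgebra K (σ → ℤ)

variable {K : Type*} [Field K] {σ : Type*} [Fintype σ]

/-- `t ^ a = ∏ i, (t i) ^ (a i)` for a torus point `t ∈ (Kˣ)^σ` and `a ∈ ℤ^σ`. -/
def torusPow (t : σ → Kˣ) (a : σ → ℤ) : K :=
  ∏ i, ((t i ^ a i : Kˣ) : K)

/-- Evaluation of a Laurent polynomial `f = ∑ a α_a x^a` at a point `t` of the
torus: `f(t) = ∑ a α_a t^a`. -/
def laurentEval (f : LaurentPoly K σ) (t : σ → Kˣ) : K :=
  f.coeff.sum fun a c => c * torusPow t a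

/-- The twist `t*f = ∑ a α_a t^a x^a` of a Laurent polynomial by a torus point. -/
def laurentTwist (t : σ → Kˣ) (f : LaurentPoly K σ) : LaurentPoly K σ :=
  AddMonoidAlgebra.ofCoeff (f.coeff.sum fun a c => Finsupp.single a (c * torusPow t a))

/-- The height of a (prime) ideal: the supremum of lengths of chains of prime
ideals strictly contained in it. -/
def idealHeight {R : Type*} [CommRing R] (P : Ideal R) : ℕ∞ :=
  Set.chainHeight {Q : Ideal R | Q.IsPrime ∧ Q < P} (· < ·)

/-- A family of Laurent polynomials meets properly if, for every subset `I` of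
the index set, every minimal prime of the ideal generated by the corresponding
subfamily has height `#I`. -/
def MeetsProperly {k : ℕ} (g : Fin k → LaurentPoly K σ) : Prop :=
  ∀ I : Finset (Fin k), ∀ P ∈ (Ideal.span (g '' ↑I)).minimalPrimes,
    idealHeight P = I.card

/-!
Take `N` larger than every coordinate difference of points of `A`, and let `G` be the group of
`N`-torsion points of the compact torus `(S¹)ʳ`. For `a ≠ b` in `A` the character `ω ↦ ω^(b-a)`
is then nontrivial on `G`, so orthogonality of characters gives, for every `c ∈ (S¹)ʳ`,
`|G| p_a c^a = ∑_{ω ∈ G} p(ωc) ω^(-a)`. All these monomials have absolute value `1`, whence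
`|p_a| ≤ max_{ω ∈ G} |p(ωc)|`, and `F = G c` works as soon as `g(ωc) ≠ 0` for all `ω`. Such a
`c` exists: the monomials `x^a` stay pairwise distinct as characters of `(S¹)ʳ`, hence are
linearly independent there (Artin), so the nonzero Laurent polynomial `∏_ω g(ω x)` does not
vanish identically on `(S¹)ʳ`.
-/

lemma torusPow_ne_zero (t : σ → Kˣ) (a : σ → ℤ) : torusPow t a ≠ 0 :=
  Finset.prod_ne_zero_iff.2 fun _ _ => Units.ne_zero _

lemma torusPow_zero (t : σ → Kˣ) : torusPow t 0 = 1 := by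
  simp [torusPow]

lemma torusPow_add (t : σ → Kˣ) (a b : σ → ℤ) :
    torusPow t (a + b) = torusPow t a * torusPow t b := by
  simp [torusPow, zpow_add, Finset.prod_mul_distrib]

lemma torusPow_mul (s t : σ → Kˣ) (a : σ → ℤ) :
    torusPow (s * t) a = torusPow s a * torusPow t a := by
  simp [torusPow, mul_zpow, Finset.prod_mul_distrib]

lemma torusPow_eq_of_forall_ne_eq_one {t : σ → Kˣ} {i : σ} (ht : ∀ j ≠ i, t j = 1)
    (a : σ → ℤ) : torusPow t a = ((t i ^ a i : Kˣ) : K) := by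
  rw [torusPow, Fintype.prod_eq_single i fun j hj => by simp [ht j hj]]

def torusChar (a : σ → ℤ) : (σ → Kˣ) →* K where
  toFun t := torusPow t a
  map_one' := by simp [torusPow]
  map_mul' s t := torusPow_mul s t a

@[simp]
lemma torusChar_apply (a : σ → ℤ) (t : σ → Kˣ) : torusChar a t = torusPow t a := rfl

lemma torusChar_zero : torusChar (0 : σ → ℤ) = (1 : (σ → Kˣ) →* K) :=
  MonoidHom.ext torusPow_zero

lemma torusChar_add (a b : σ → ℤ) : torusChar (K := K) (a + b) = torusChar a * torusChar b := by
  ext t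
  exact torusPow_add t a b

def laurentEvalAlgHom (t : σ → Kˣ) : LaurentPoly K σ →ₐ[K] K :=
  AddMonoidAlgebra.lift K K (σ → ℤ)
    { toFun := fun a => torusPow t a.toAdd
      map_one' := torusPow_zero t
      map_mul' := fun a b => torusPow_add t a.toAdd b.toAdd }

@[simp]
lemma laurentEvalAlgHom_apply (t : σ → Kˣ) (f : LaurentPoly K σ) :
    laurentEvalAlgHom t f = laurentEval f t := rfl

lemma laurentEval_prod {ι : Type*} (s : Finset ι) (f : ι → LaurentPoly K σ) (t : σ → Kˣ) :
    laurentEval (∏ i ∈ s, f i) t = ∏ i ∈ s, laurentEval (f i) t := by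
  simp only [← laurentEvalAlgHom_apply, map_prod]

lemma laurentEval_eq_sum_torusChar {A : Finset (σ → ℤ)} {p : LaurentPoly K σ}
    (hp : p.coeff.support ⊆ A) (t : σ → Kˣ) :
    laurentEval p t = ∑ b ∈ A, p.coeff b * torusChar b t :=
  Finsupp.sum_of_support_subset p.coeff hp (fun b c => c * torusChar b t) fun _ _ => zero_mul _

lemma laurentTwist_coeff (t : σ → Kˣ) (f : LaurentPoly K σ) (a : σ → ℤ) :
    (laurentTwist t f).coeff a = f.coeff a * torusPow t a := by
  classical
  simp only [laurentTwist, AddMonoidAlgebra.coeff_ofCoeff, Finsupp.sum_apply, Finsupp.single_apply]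
  rw [Finsupp.sum_ite_eq', ite_eq_left_iff]
  intro ha
  rw [Finsupp.notMem_support_iff.1 ha, zero_mul]

lemma laurentTwist_ne_zero (t : σ → Kˣ) {f : LaurentPoly K σ} (hf : f ≠ 0) :
    laurentTwist t f ≠ 0 := by
  obtain ⟨a, ha⟩ : ∃ a, f.coeff a ≠ 0 := by
    by_contra! h
    exact hf (AddMonoidAlgebra.coeff_eq_zero.1 (Finsupp.ext h))
  intro h
  have := laurentTwist_coeff t f a
  rw [h, AddMonoidAlgebra.coeff_zero, Finsupp.zero_apply] at this
  exact mul_ne_zero ha (torusPow_ne_zero t a) this.symm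

lemma laurentEval_laurentTwist (t s : σ → Kˣ) (f : LaurentPoly K σ) :
    laurentEval (laurentTwist t f) s = laurentEval f (t * s) := by
  have hsupp : (laurentTwist t f).coeff.support ⊆ f.coeff.support := fun a ha => by
    simp_all [laurentTwist_coeff]
  rw [laurentEval_eq_sum_torusChar hsupp, laurentEval_eq_sum_torusChar subset_rfl]
  simp [laurentTwist_coeff, torusPow_mul, mul_assoc]

lemma exists_laurentEval_ne_zero {G : Type*} [Monoid G] (ρ : G →* (σ → Kˣ))
    (hρ : Function.Injective fun a : σ → ℤ => (torusChar a).comp ρ)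
    {f : LaurentPoly K σ} (hf : f ≠ 0) : ∃ x, laurentEval f (ρ x) ≠ 0 := by
  have hli := (linearIndependent_monoidHom G K).comp _ hρ
  by_contra! h
  refine hf (AddMonoidAlgebra.coeff_eq_zero.1 (linearIndependent_iff.1 hli f.coeff ?_))
  ext x
  rw [Finsupp.linearCombination_apply, Finsupp.sum_apply', Pi.zero_apply]
  exact h x

lemma torusChar_mul_torusChar_neg (a b : σ → ℤ) (s t : σ → Kˣ) :
    torusChar b (s * t) * torusChar (-a) s = torusChar b t * torusChar (b - a) s := by
  rw [map_mul, sub_eq_add_neg, torusChar_add, MonoidHom.mul_apply]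
  ring

theorem sum_laurentEval_mul_torusChar_neg {G : Type*} [Group G] [Fintype G]
    (ρ : G →* (σ → Kˣ)) {A : Finset (σ → ℤ)} {p : LaurentPoly K σ} (hp : p.coeff.support ⊆ A)
    {a : σ → ℤ} (ha : a ∈ A) (hA : ∀ b ∈ A, b ≠ a → (torusChar (b - a)).comp ρ ≠ 1)
    (t : σ → Kˣ) :
    ∑ ω, laurentEval p (ρ ω * t) * torusChar (-a) (ρ ω) =
      Fintype.card G * (p.coeff a * torusChar a t) := by
  calc ∑ ω, laurentEval p (ρ ω * t) * torusChar (-a) (ρ ω)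
      = ∑ b ∈ A, p.coeff b * torusChar b t * ∑ ω, (torusChar (b - a)).comp ρ ω := by
        simp_rw [laurentEval_eq_sum_torusChar hp, Finset.sum_mul, mul_assoc,
          torusChar_mul_torusChar_neg, Finset.mul_sum]
        exact Finset.sum_comm
    _ = p.coeff a * torusChar a t * ∑ ω, (torusChar (a - a)).comp ρ ω :=
        Finset.sum_eq_single_of_mem a ha fun b hb hba => by
          rw [sum_hom_units_eq_zero _ (hA b hb hba), mul_zero]
    _ = Fintype.card G * (p.coeff a * torusChar a t) := by
        simp [torusPow_zero, mul_comm]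

lemma exists_pos_forall_dvd_sub_imp_eq (A : Finset (σ → ℤ)) :
    ∃ N : ℕ, 0 < N ∧ ∀ a ∈ A, ∀ b ∈ A, ∀ i, (N : ℤ) ∣ b i - a i → b i = a i := by
  let B := (A ×ˢ A).sup fun x => Finset.univ.sup fun i => (x.2 i - x.1 i).natAbs
  refine ⟨B + 1, B.succ_pos, fun a ha b hb i hdvd =>
    sub_eq_zero.1 (Int.eq_zero_of_dvd_of_natAbs_lt_natAbs hdvd ?_)⟩
  have hle : (b i - a i).natAbs ≤ B :=
    Finset.le_sup_of_le (b := (a, b)) (Finset.mem_product.2 ⟨ha, hb⟩)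
      (Finset.le_sup (f := fun i => (b i - a i).natAbs) (Finset.mem_univ i))
  rw [Int.natAbs_natCast]
  exact Nat.lt_succ_of_le hle

abbrev circleTorus (σ : Type*) : (σ → Circle) →* (σ → ℂˣ) := Circle.toUnits.compLeft σ

lemma norm_torusChar_circleTorus (a : σ → ℤ) (c : σ → Circle) :
    ‖torusChar a (circleTorus σ c)‖ = 1 := by
  simp [torusPow, Circle.norm_coe]

abbrev rootsOfUnityGrid (N : ℕ) [NeZero N] (σ : Type*) : (σ → rootsOfUnity N ℂ) →* (σ → Circle) :=
  (rootsOfUnitytoCircle N).compLeft σ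

lemma torusChar_comp_rootsOfUnityGrid_ne_one {N : ℕ} [NeZero N] {d : σ → ℤ} {i : σ}
    (hd : ¬ (N : ℤ) ∣ d i) :
    (torusChar d).comp ((circleTorus σ).comp (rootsOfUnityGrid N σ)) ≠ 1 := by
  classical
  have hζ := Complex.isPrimitiveRoot_exp N (NeZero.ne N)
  intro h
  have hpt := DFunLike.congr_fun h (Pi.mulSingle i hζ.toRootsOfUnity)
  simp only [MonoidHom.comp_apply, MonoidHom.one_apply, torusChar_apply] at hpt
  rw [torusPow_eq_of_forall_ne_eq_one (i := i) fun j hj => by simp [Pi.mulSingle_eq_of_ne hj]] at hpt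
  simp only [MonoidHom.compLeft_apply, Function.comp_apply, Pi.mulSingle_eq_same,
    Circle.toUnits_apply, Units.val_zpow_eq_zpow_val, Units.val_mk0] at hpt
  exact hd ((hζ.zpow_eq_one_iff_dvd _).1 hpt)

lemma torusChar_comp_circleTorus_injective :
    Function.Injective fun a : σ → ℤ => (torusChar a).comp (circleTorus σ) := by
  intro a b (hab : (torusChar a).comp (circleTorus σ) = (torusChar b).comp (circleTorus σ))
  by_contra hne
  obtain ⟨i, hi⟩ := Function.ne_iff.1 hne
  have hdvd : ¬ (((a i - b i).natAbs + 1 : ℕ) : ℤ) ∣ (a - b) i := fun h =>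
    hi (sub_eq_zero.1 (Int.eq_zero_of_dvd_of_natAbs_lt_natAbs h
      (by simp only [Int.natAbs_natCast, Nat.lt_add_one])))
  apply torusChar_comp_rootsOfUnityGrid_ne_one hdvd
  have hab' : (torusChar (a - b)).comp (circleTorus σ) = 1 := by
    rw [sub_eq_add_neg, torusChar_add, MonoidHom.mul_comp, hab, ← MonoidHom.mul_comp,
      ← torusChar_add, add_neg_cancel, torusChar_zero, MonoidHom.one_comp]
  rw [← MonoidHom.comp_assoc, hab', MonoidHom.one_comp]

theorem norm_coeff_le_of_forall_norm_laurentEval_le {G : Type*} [Group G] [Fintype G]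
    (ρ : G →* (σ → Circle)) {A : Finset (σ → ℤ)} {p : LaurentPoly ℂ σ}
    (hp : p.coeff.support ⊆ A) {a : σ → ℤ} (ha : a ∈ A)
    (hA : ∀ b ∈ A, b ≠ a → (torusChar (b - a)).comp ((circleTorus σ).comp ρ) ≠ 1)
    (c : σ → Circle) {M : ℝ} (hM : ∀ ω, ‖laurentEval p (circleTorus σ (ρ ω * c))‖ ≤ M) :
    ‖p.coeff a‖ ≤ M := by
  have key := sum_laurentEval_mul_torusChar_neg _ hp ha hA (circleTorus σ c)
  simp only [MonoidHom.comp_apply, ← map_mul] at key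
  refine le_of_mul_le_mul_left ?_ (Nat.cast_pos.2 (Fintype.card_pos (α := G)))
  calc (Fintype.card G : ℝ) * ‖p.coeff a‖
      = ‖∑ ω, laurentEval p (circleTorus σ (ρ ω * c)) * torusChar (-a) (circleTorus σ (ρ ω))‖ := by
        rw [key, norm_mul, norm_mul, norm_torusChar_circleTorus, Complex.norm_natCast, mul_one]
    _ ≤ ∑ ω, ‖laurentEval p (circleTorus σ (ρ ω * c))‖ := by
        refine (norm_sum_le _ _).trans_eq (Finset.sum_congr rfl fun ω _ => ?_)
        rw [norm_mul, norm_torusChar_circleTorus, mul_one]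
    _ ≤ Fintype.card G * M := (Finset.sum_le_sum fun ω _ => hM ω).trans_eq (by simp)

theorem coefficients_bounded_by_values_on_finite_set_general
    (r : ℕ) (A : Finset (Fin r → ℤ))
    (g : LaurentPoly ℂ (Fin r)) (hg : g ≠ 0) :
    ∃ (F : Finset (Fin r → ℂˣ)) (hF : F.Nonempty),
      (∀ u ∈ F, laurentEval g u ≠ 0) ∧
      ∀ p : LaurentPoly ℂ (Fin r), p.coeff.support ⊆ A →
        ∀ a ∈ A, ‖p.coeff a‖ ≤
          F.sup' hF fun u => ‖laurentEval p u‖ := by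
  obtain ⟨N, hN, hsep⟩ := exists_pos_forall_dvd_sub_imp_eq A
  have : NeZero N := ⟨hN.ne'⟩
  have := Fintype.ofFinite (rootsOfUnity N ℂ)
  let ρ := rootsOfUnityGrid N (Fin r)
  have hH : ∏ ω, laurentTwist (circleTorus _ (ρ ω)) g ≠ 0 :=
    Finset.prod_ne_zero_iff.2 fun ω _ => laurentTwist_ne_zero _ hg
  obtain ⟨c, hc⟩ := exists_laurentEval_ne_zero _ torusChar_comp_circleTorus_injective hH
  simp only [laurentEval_prod, laurentEval_laurentTwist, ← map_mul] at hc
  let u ω := circleTorus (Fin r) (ρ ω * c)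
  refine ⟨Finset.univ.image u, Finset.univ_nonempty.image u, ?_, fun p hp a ha => ?_⟩
  · intro v hv
    obtain ⟨ω, -, rfl⟩ := Finset.mem_image.1 hv
    exact Finset.prod_ne_zero_iff.1 hc ω (Finset.mem_univ ω)
  refine norm_coeff_le_of_forall_norm_laurentEval_le ρ hp ha (fun b hb hba => ?_) c
    fun ω => Finset.le_sup' (fun v => ‖laurentEval p v‖) (Finset.mem_image_of_mem u (Finset.mem_univ ω))
  obtain ⟨i, hi⟩ := Function.ne_iff.1 hba
  exact torusChar_comp_rootsOfUnityGrid_ne_one fun h => hi (hsep a ha b hb i h)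

/-- For a finite set `A ⊂ ℤʳ` and a nonzero Laurent polynomial
`g` over `ℂ`, there is a finite set `F` of torus points avoiding the zeros of
`g` such that for every Laurent polynomial `p` supported on `A`, the maximum of
the absolute values of the coefficients of `p` is at most the maximum of the
absolute values of `p` on `F`. -/
theorem coefficients_bounded_by_values_on_finite_set
    (r : ℕ) (hr : 1 ≤ r) (A : Finset (Fin r → ℤ))
    (g : LaurentPoly ℂ (Fin r)) (hg : g ≠ 0) :
    ∃ (F : Finset (Fin r → ℂˣ)) (hF : F.Nonempty),
      (∀ u ∈ F, laurentEval g u ≠ 0) ∧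
      ∀ p : LaurentPoly ℂ (Fin r), p.coeff.support ⊆ A →
        ∀ a ∈ A, ‖p.coeff a‖ ≤
          F.sup' hF fun u => ‖laurentEval p u‖ :=
  coefficients_bounded_by_values_on_finite_set_general r A g hg
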